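/- For p > n/(n+2) with p ≠ 1 and positive definite n×n matrix C, the function g_{p,C}(x) = A_p (1 + (1−p)β x^T C^{-1} x)_+^{1/(p−1)}, with β = 1/(2p − n(1−p)) and A_p as specified, is a probability density on ℝ^n: it is nonnegative and integrates to 1. -/

import Mathlib

/-!
Whitening by `C^{1/2}` turns the quadratic form into `y ⬝ᵥ y` at the cost of the factor
`√(det C)`, and polar coordinates (with `t = r²`) reduce the integral over `ℝⁿ` to
`π^{n/2} / Γ(n/2) · ∫₀^∞ t^{n/2-1} (1 + κ t)₊^{1/(p-1)} dt` with `κ = (1 - p) β`.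
Scaling out `κ` leaves a Beta integral, over `(0, ∞)` in the form `t^{a-1} (1 + t)^{-(a+b)}`
when `p < 1` and over `(0, 1)` when `p > 1`; either way the result is `B(n/2, ·) / |κ|^{n/2}`,
and `A_p` is precisely the reciprocal of the accumulated constant.
-/

open MeasureTheory Matrix

/-- The normalizing constant A_p of the Rényi-maximizing density. -/
noncomputable def Ap (n : ℕ) (p : ℝ) (C : Matrix (Fin n) (Fin n) ℝ) : ℝ :=
  if p < 1 then
    Real.Gamma (1 / (1 - p)) * ((1 / (2 * p - n * (1 - p))) * (1 - p)) ^ ((n : ℝ) / 2) /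
      (Real.Gamma (1 / (1 - p) - n / 2) * Real.pi ^ ((n : ℝ) / 2) * C.det ^ ((1 : ℝ) / 2))
  else
    Real.Gamma (p / (p - 1) + n / 2) * ((1 / (2 * p - n * (1 - p))) * (p - 1)) ^ ((n : ℝ) / 2) /
      (Real.Gamma (p / (p - 1)) * Real.pi ^ ((n : ℝ) / 2) * C.det ^ ((1 : ℝ) / 2))

/-- The Rényi-maximizing (Student-t / Student-r) density g_{p,C}. -/
noncomputable def gpc (n : ℕ) (p : ℝ) (C : Matrix (Fin n) (Fin n) ℝ) (x : Fin n → ℝ) : ℝ :=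
  Ap n p C *
    max (1 + (1 - p) * (1 / (2 * p - n * (1 - p))) * (x ⬝ᵥ C⁻¹.mulVec x)) 0 ^ (1 / (p - 1))

open Real Set ProbabilityTheory

theorem integral_Ioo_rpow_mul_one_sub_rpow {a b : ℝ} (ha : 0 < a) (hb : 0 < b) :
    ∫ t in Ioo (0 : ℝ) 1, t ^ (a - 1) * (1 - t) ^ (b - 1) = beta a b := by
  have hcast : Complex.betaIntegral a b =
      ((∫ t in (0 : ℝ)..1, t ^ (a - 1) * (1 - t) ^ (b - 1) : ℝ) : ℂ) := by
    rw [Complex.betaIntegral, ← intervalIntegral.integral_ofReal]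
    refine intervalIntegral.integral_congr fun t ht => ?_
    rw [uIcc_of_le zero_le_one] at ht
    push_cast [Complex.ofReal_cpow ht.1, Complex.ofReal_cpow (sub_nonneg.2 ht.2)]
    rfl
  rw [beta_eq_betaIntegralReal a b ha hb, hcast, Complex.ofReal_re,
    intervalIntegral.integral_of_le zero_le_one, integral_Ioc_eq_integral_Ioo]

theorem integral_Ioi_rpow_mul_one_add_rpow_neg {a b : ℝ} (ha : 0 < a) (hb : 0 < b) :
    ∫ t in Ioi (0 : ℝ), t ^ (a - 1) * (1 + t) ^ (-(a + b)) = beta a b := by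
  have himage : (fun u : ℝ => u / (1 - u)) '' Ioo 0 1 = Ioi 0 := by
    ext t
    refine ⟨fun ⟨u, hu, hut⟩ => hut ▸ div_pos hu.1 (sub_pos.2 hu.2), fun ht => ?_⟩
    have ht : (0 : ℝ) < t := ht
    refine ⟨t / (1 + t), ⟨by positivity, (div_lt_one (by positivity)).2 (by linarith)⟩, ?_⟩
    field_simp
    ring
  have hderiv : ∀ u ∈ Ioo (0 : ℝ) 1,
      HasDerivWithinAt (fun u : ℝ => u / (1 - u)) ((1 - u) ^ (-2 : ℝ)) (Ioo 0 1) u := by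
    intro u hu
    have h1u : (1 : ℝ) - u ≠ 0 := (sub_pos.2 hu.2).ne'
    refine ((hasDerivAt_id u).div ((hasDerivAt_id u).const_sub 1) h1u).hasDerivWithinAt
      |>.congr_deriv ?_
    rw [rpow_neg (sub_pos.2 hu.2).le, rpow_two]
    simp only [id]
    ring
  have hinj : InjOn (fun u : ℝ => u / (1 - u)) (Ioo 0 1) := by
    intro x hx y hy hxy
    have := (sub_pos.2 hx.2).ne'
    have := (sub_pos.2 hy.2).ne'
    field_simp at hxy
    linarith
  rw [← himage, integral_image_eq_integral_abs_deriv_smul measurableSet_Ioo hderiv hinj,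
    ← integral_Ioo_rpow_mul_one_sub_rpow ha hb]
  refine setIntegral_congr_fun measurableSet_Ioo fun u hu => ?_
  have hu0 : 0 < u := hu.1
  have hu1 : 0 < 1 - u := sub_pos.2 hu.2
  have hplus : 1 + u / (1 - u) = (1 - u)⁻¹ := by field_simp; ring
  rw [smul_eq_mul, abs_of_pos (rpow_pos_of_pos hu1 _), hplus, div_rpow hu0.le hu1.le,
    inv_rpow hu1.le, ← rpow_neg hu1.le, neg_neg, div_eq_mul_inv, ← rpow_neg hu1.le]
  have hpow :
      (1 - u) ^ (-2 : ℝ) * ((1 - u) ^ (-(a - 1)) * (1 - u) ^ (a + b)) = (1 - u) ^ (b - 1) := by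
    rw [← rpow_add hu1, ← rpow_add hu1]
    ring_nf
  rw [← hpow]
  ring

theorem integral_Ioi_rpow_mul_comp_const_mul {κ : ℝ} (hκ : 0 < κ) (a : ℝ) (H : ℝ → ℝ) :
    ∫ t in Ioi (0 : ℝ), t ^ (a - 1) * H (κ * t) =
      (∫ t in Ioi (0 : ℝ), t ^ (a - 1) * H t) / κ ^ a := by
  have hscale := integral_comp_mul_left_Ioi (fun t => t ^ (a - 1) * H t) 0 hκ
  rw [mul_zero, smul_eq_mul] at hscale
  calc ∫ t in Ioi (0 : ℝ), t ^ (a - 1) * H (κ * t)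
      = κ ^ (1 - a) * ∫ t in Ioi (0 : ℝ), (κ * t) ^ (a - 1) * H (κ * t) := by
        rw [← integral_const_mul]
        refine setIntegral_congr_fun measurableSet_Ioi fun t ht => ?_
        rw [mul_rpow hκ.le (le_of_lt ht), ← mul_assoc, ← mul_assoc, ← rpow_add hκ]
        simp
    _ = _ := by
        rw [hscale, rpow_sub hκ, rpow_one]
        field_simp

theorem integral_Ioi_rpow_mul_max_one_add_mul_rpow_of_pos {κ a e : ℝ} (hκ : 0 < κ)
    (ha : 0 < a) (hae : a < -e) :
    ∫ t in Ioi (0 : ℝ), t ^ (a - 1) * max (1 + κ * t) 0 ^ e = beta a (-e - a) / κ ^ a := by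
  have hprofile : ∀ t ∈ Ioi (0 : ℝ),
      t ^ (a - 1) * max (1 + κ * t) 0 ^ e = t ^ (a - 1) * (1 + κ * t) ^ (-(a + (-e - a))) := by
    intro t ht
    have : 0 < κ * t := mul_pos hκ ht
    rw [max_eq_left (by linarith), show -(a + (-e - a)) = e by ring]
  rw [setIntegral_congr_fun measurableSet_Ioi hprofile,
    integral_Ioi_rpow_mul_comp_const_mul hκ a (fun u => (1 + u) ^ (-(a + (-e - a)))),
    integral_Ioi_rpow_mul_one_add_rpow_neg ha (by linarith)]

theorem integral_Ioi_rpow_mul_max_one_add_mul_rpow_of_neg {κ a e : ℝ} (hκ : κ < 0)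
    (ha : 0 < a) (he : 0 < e) :
    ∫ t in Ioi (0 : ℝ), t ^ (a - 1) * max (1 + κ * t) 0 ^ e = beta a (e + 1) / (-κ) ^ a := by
  have hscale :=
    integral_Ioi_rpow_mul_comp_const_mul (neg_pos.2 hκ) a (fun u => max (1 - u) 0 ^ e)
  simp only [neg_mul, sub_neg_eq_add] at hscale
  rw [hscale]
  congr 1
  have hsupport : ∫ t in Ioi (0 : ℝ), t ^ (a - 1) * max (1 - t) 0 ^ e
      = ∫ t in Ioo (0 : ℝ) 1, t ^ (a - 1) * max (1 - t) 0 ^ e := by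
    refine setIntegral_eq_of_subset_of_forall_sdiff_eq_zero measurableSet_Ioi
      Ioo_subset_Ioi_self fun t ht => ?_
    have h1t : 1 ≤ t := le_of_not_gt fun h => ht.2 ⟨ht.1, h⟩
    rw [max_eq_right (by linarith), zero_rpow he.ne', mul_zero]
  rw [hsupport, ← integral_Ioo_rpow_mul_one_sub_rpow ha (by linarith)]
  refine setIntegral_congr_fun measurableSet_Ioo fun t ht => ?_
  rw [max_eq_left (sub_nonneg.2 ht.2.le), add_sub_cancel_right]

theorem integral_comp_mulVec {n : ℕ} {M : Matrix (Fin n) (Fin n) ℝ} (hM : M.det ≠ 0)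
    (F : (Fin n → ℝ) → ℝ) :
    ∫ y, F (M *ᵥ y) = |M.det|⁻¹ * ∫ x, F x := by
  have hdet : LinearMap.det (toLin' M) ≠ 0 := by rwa [LinearMap.det_toLin']
  let e := ((toLin' M).equivOfDetNeZero hdet).toContinuousLinearEquiv.toHomeomorph.toMeasurableEquiv
  have hmap := integral_map_equiv (μ := volume) e F
  have hcoe : (e : (Fin n → ℝ) → Fin n → ℝ) = toLin' M := rfl
  rw [hcoe, Real.map_linearMap_volume_pi_eq_smul_volume_pi hdet, integral_smul_measure,
    LinearMap.det_toLin', ENNReal.toReal_ofReal (abs_nonneg _), abs_inv, smul_eq_mul] at hmap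
  simpa [toLin'_apply] using hmap.symm

open scoped MatrixOrder in
theorem Matrix.PosDef.exists_whitening {n : ℕ} {C : Matrix (Fin n) (Fin n) ℝ} (hC : C.PosDef) :
    ∃ M : Matrix (Fin n) (Fin n) ℝ, |M.det| = C.det ^ (1 / 2 : ℝ) ∧
      ∀ y, M *ᵥ y ⬝ᵥ C⁻¹ *ᵥ (M *ᵥ y) = y ⬝ᵥ y := by
  set M := CFC.sqrt C
  have hMM : M * M = C := CFC.sqrt_mul_sqrt_self C hC.posSemidef.nonneg
  have hMdet : M.det ≠ 0 := by
    intro h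
    have := hC.det_pos
    rw [← hMM, det_mul, h, mul_zero] at this
    exact lt_irrefl 0 this
  have hMt : Mᵀ = M := by
    simpa using (CFC.sqrt_nonneg C).posSemidef.isHermitian.eq
  refine ⟨M, ?_, fun y => ?_⟩
  · rw [← sqrt_eq_rpow, ← hMM, det_mul, sqrt_mul_self_eq_abs]
  · have hinv : M * (C⁻¹ * M) = 1 := by
      have hU := isUnit_iff_ne_zero.2 hMdet
      rw [← hMM, mul_inv_rev, Matrix.mul_assoc M⁻¹, nonsing_inv_mul _ hU, Matrix.mul_one,
        mul_nonsing_inv _ hU]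
    calc M *ᵥ y ⬝ᵥ C⁻¹ *ᵥ (M *ᵥ y) = y ᵥ* Mᵀ ⬝ᵥ (C⁻¹ * M) *ᵥ y := by
          rw [vecMul_transpose, mulVec_mulVec]
      _ = y ⬝ᵥ y := by
          rw [hMt, ← dotProduct_mulVec, mulVec_mulVec, hinv, one_mulVec]

theorem integral_comp_dotProduct_inv_mulVec {n : ℕ} {C : Matrix (Fin n) (Fin n) ℝ}
    (hC : C.PosDef) (G : ℝ → ℝ) :
    ∫ x, G (x ⬝ᵥ C⁻¹ *ᵥ x) = C.det ^ (1 / 2 : ℝ) * ∫ y : Fin n → ℝ, G (y ⬝ᵥ y) := by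
  obtain ⟨M, hMdet, hM⟩ := hC.exists_whitening
  have hMdet0 : M.det ≠ 0 := abs_pos.1 (hMdet ▸ rpow_pos_of_pos hC.det_pos _)
  simp_rw [← hM, integral_comp_mulVec hMdet0 (fun x => G (x ⬝ᵥ C⁻¹ *ᵥ x)), hMdet]
  rw [← mul_assoc, mul_inv_cancel₀ (hMdet ▸ abs_ne_zero.2 hMdet0), one_mul]

theorem integral_comp_dotProduct_self {n : ℕ} (hn : 0 < n) (G : ℝ → ℝ) :
    ∫ y : Fin n → ℝ, G (y ⬝ᵥ y) =
      π ^ ((n : ℝ) / 2) / Gamma ((n : ℝ) / 2) *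
        ∫ t in Ioi (0 : ℝ), t ^ ((n : ℝ) / 2 - 1) * G t := by
  have : Nonempty (Fin n) := ⟨⟨0, hn⟩⟩
  have hnorm : ∀ x : EuclideanSpace ℝ (Fin n),
      (MeasurableEquiv.toLp 2 (Fin n → ℝ)).symm x ⬝ᵥ (MeasurableEquiv.toLp 2 (Fin n → ℝ)).symm x
        = ‖x‖ ^ 2 := by
    intro x
    rw [EuclideanSpace.norm_eq, sq_sqrt (by positivity)]
    simp [dotProduct, sq]
  have hsquare := integral_comp_rpow_Ioi_of_pos (g := fun t => t ^ ((n : ℝ) / 2 - 1) * G t)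
    two_pos
  rw [← (EuclideanSpace.volume_preserving_symm_measurableEquiv_toLp (Fin n)).integral_comp
    (MeasurableEquiv.measurableEmbedding _)]
  simp_rw [hnorm]
  rw [integral_fun_norm_addHaar volume (fun r => G (r ^ 2))]
  have hradial : ∫ r in Ioi (0 : ℝ), r ^ (n - 1) • G (r ^ 2) =
      (∫ t in Ioi (0 : ℝ), t ^ ((n : ℝ) / 2 - 1) * G t) / 2 := by
    rw [← hsquare, ← integral_div]
    refine setIntegral_congr_fun measurableSet_Ioi fun r hr => ?_
    have hr : (0 : ℝ) < r := hr
    have hpow : r ^ ((2 : ℝ) - 1) * (r ^ (2 : ℝ)) ^ ((n : ℝ) / 2 - 1) = r ^ (n - 1) := by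
      rw [← rpow_mul hr.le, ← rpow_add hr, ← rpow_natCast, Nat.cast_sub hn, Nat.cast_one]
      ring_nf
    rw [smul_eq_mul, smul_eq_mul, rpow_two, ← hpow, rpow_two]
    ring
  have hball : volume.real (Metric.ball (0 : EuclideanSpace ℝ (Fin n)) 1) =
      π ^ ((n : ℝ) / 2) / ((n : ℝ) / 2 * Gamma ((n : ℝ) / 2)) := by
    rw [measureReal_def, EuclideanSpace.volume_ball, Fintype.card_fin, ENNReal.ofReal_one,
      one_pow, one_mul, ENNReal.toReal_ofReal (by positivity), sqrt_eq_rpow, ← rpow_natCast,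
      ← rpow_mul pi_pos.le, Gamma_add_one (by positivity)]
    ring_nf
  rw [finrank_euclideanSpace_fin, hradial, hball, nsmul_eq_mul, smul_eq_mul]
  field_simp

theorem Ap_eq_inv_of_lt_one {n : ℕ} (hn : 0 < n) {p : ℝ} (hp : p < 1)
    (C : Matrix (Fin n) (Fin n) ℝ) :
    Ap n p C = (C.det ^ (1 / 2 : ℝ) * (π ^ ((n : ℝ) / 2) / Gamma ((n : ℝ) / 2) *
      (beta ((n : ℝ) / 2) (-(1 / (p - 1)) - n / 2) /
        ((1 - p) * (1 / (2 * p - n * (1 - p)))) ^ ((n : ℝ) / 2))))⁻¹ := by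
  have hΓ : Gamma ((n : ℝ) / 2) ≠ 0 := (Gamma_pos_of_pos (by positivity)).ne'
  have hs : -(1 / (p - 1)) = 1 / (1 - p) := by rw [← one_div_neg_eq_neg_one_div, neg_sub]
  rw [Ap, if_pos hp, beta, hs, add_sub_cancel, mul_comm (1 - p)]
  field_simp

theorem Ap_eq_inv_of_one_lt {n : ℕ} (hn : 0 < n) {p : ℝ} (hp : 1 < p)
    (C : Matrix (Fin n) (Fin n) ℝ) :
    Ap n p C = (C.det ^ (1 / 2 : ℝ) * (π ^ ((n : ℝ) / 2) / Gamma ((n : ℝ) / 2) *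
      (beta ((n : ℝ) / 2) (1 / (p - 1) + 1) /
        (-((1 - p) * (1 / (2 * p - n * (1 - p))))) ^ ((n : ℝ) / 2))))⁻¹ := by
  have hΓ : Gamma ((n : ℝ) / 2) ≠ 0 := (Gamma_pos_of_pos (by positivity)).ne'
  have he : 1 / (p - 1) + 1 = p / (p - 1) := by field_simp [(sub_pos.2 hp).ne']; ring
  rw [Ap, if_neg hp.not_gt, beta, he, add_comm ((n : ℝ) / 2), ← neg_mul, neg_sub,
    mul_comm (p - 1)]
  field_simp

/-- g_{p,C} is a probability density on ℝⁿ: nonnegative and integrating to 1. -/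
theorem stmt_18 (n : ℕ) (hn : 0 < n) (p : ℝ)
    (hp : (n : ℝ) / (n + 2) < p) (hp1 : p ≠ 1)
    (C : Matrix (Fin n) (Fin n) ℝ) (hC : C.PosDef) :
    (∀ x, 0 ≤ gpc n p C x) ∧ (∫ x : Fin n → ℝ, gpc n p C x) = 1 := by
  have hn2 : 0 < (n : ℝ) / 2 := by positivity
  rw [div_lt_iff₀ (by positivity)] at hp
  have hβ : 0 < 1 / (2 * p - n * (1 - p)) := one_div_pos.2 (by linarith)
  set G : ℝ → ℝ := fun q =>
    max (1 + (1 - p) * (1 / (2 * p - n * (1 - p))) * q) 0 ^ (1 / (p - 1))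
  obtain ⟨X, hX, hprofile, hAp⟩ : ∃ X > 0, ∫ t in Ioi (0 : ℝ), t ^ ((n : ℝ) / 2 - 1) * G t = X ∧
      Ap n p C = (C.det ^ (1 / 2 : ℝ) * (π ^ ((n : ℝ) / 2) / Gamma ((n : ℝ) / 2) * X))⁻¹ := by
    rcases hp1.lt_or_gt with hlt | hgt
    · have hκ : 0 < (1 - p) * (1 / (2 * p - n * (1 - p))) := mul_pos (sub_pos.2 hlt) hβ
      have hs : (n : ℝ) / 2 < -(1 / (p - 1)) := by
        rw [← one_div_neg_eq_neg_one_div, neg_sub, lt_div_iff₀ (sub_pos.2 hlt)]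
        linarith
      exact ⟨_, div_pos (beta_pos hn2 (sub_pos.2 hs)) (rpow_pos_of_pos hκ _),
        integral_Ioi_rpow_mul_max_one_add_mul_rpow_of_pos hκ hn2 hs,
        Ap_eq_inv_of_lt_one hn hlt C⟩
    · have hκ : (1 - p) * (1 / (2 * p - n * (1 - p))) < 0 :=
        mul_neg_of_neg_of_pos (by linarith) hβ
      have he : 0 < 1 / (p - 1) := one_div_pos.2 (sub_pos.2 hgt)
      exact ⟨_, div_pos (beta_pos hn2 (by linarith)) (rpow_pos_of_pos (neg_pos.2 hκ) _),
        integral_Ioi_rpow_mul_max_one_add_mul_rpow_of_neg hκ hn2 he,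
        Ap_eq_inv_of_one_lt hn hgt C⟩
  have hY : 0 < C.det ^ (1 / 2 : ℝ) * (π ^ ((n : ℝ) / 2) / Gamma ((n : ℝ) / 2) * X) := by
    have := hC.det_pos
    have := Gamma_pos_of_pos hn2
    positivity
  have hgpc : ∀ x, gpc n p C x = Ap n p C * G (x ⬝ᵥ C⁻¹ *ᵥ x) := fun x => rfl
  refine ⟨fun x => mul_nonneg (hAp ▸ inv_nonneg.2 hY.le) (rpow_nonneg (le_max_right _ _) _), ?_⟩
  simp_rw [hgpc]
  rw [integral_const_mul, integral_comp_dotProduct_inv_mulVec hC G,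
    integral_comp_dotProduct_self hn G, hprofile, hAp, inv_mul_cancel₀ hY.ne']
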